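/- Let F ∈ K[x_0,...,x_n]_d admit a decomposition F = Σ_{i=1}^h λ_i L_i^d with the linear forms L_i pairwise non-proportional, and let H^s_{∂F} ⊂ P(K[x_0,...,x_n]_{d-s}) denote the projectivized span of the order-s partial derivatives of F. If the polynomials L_1^s,...,L_h^s span K[x_0,...,x_n]_s (equivalently, each hyperplane H_i = {⟨L_i^s, ξ⟩ = 0} in the coordinate space of H^s_{∂F} is well-defined and the collection {H_1,...,H_h} is a hyperplane arrangement), then every codimension-c intersection H_{i_1} ∩ ... ∩ H_{i_c} of c distinct hyperplanes from this collection corresponds to derivatives D^s_ξ(F) lying in the span of at most h - c of the powers L_i^{d-s}; in particular the codimension-c star configuration S_c({H_1,...,H_h}, H^s_{∂F}) is contained in H^s_{∂F} ∩ Sec_{h-c}(V^n_{d-s}). -/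

import Mathlib

open MvPolynomial

/-- The iterated partial derivative operator associated to a multi-index `σ`. -/
noncomputable def pd (K : Type) [CommSemiring K] {m : ℕ} (σ : Fin m → ℕ) :
    Module.End K (MvPolynomial (Fin m) K) :=
  (List.ofFn (fun j : Fin m =>
    ((MvPolynomial.pderiv (R := K) j).toLinearMap ^ (σ j) :
      Module.End K (MvPolynomial (Fin m) K)))).prod

/-- The linear form with coefficient vector `a`. -/
noncomputable def lform {K : Type} [CommSemiring K] {m : ℕ} (a : Fin m → K) :
    MvPolynomial (Fin m) K :=
  ∑ j, MvPolynomial.C (a j) * MvPolynomial.X j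

/-! By the derivative lemma, `D^s_ξ(∑ λ_i L_i^d) = ∑ λ_i d!/(d-s)! ⟨L_i^s, ξ⟩ L_i^{d-s}`,
so on `⋂_{j ∈ J} H_j` every summand with `i ∈ J` vanishes and only the powers `L_i^{d-s}`,
`i ∉ J`, remain. -/

section DerivativeLemma

variable {K : Type} [CommSemiring K] {m : ℕ}

theorem pderiv_lform (a : Fin m → K) (j : Fin m) : pderiv j (lform a) = C (a j) := by
  simp [lform, pderiv_X, Pi.single_apply]

theorem pderiv_pow_apply_lform_pow (a : Fin m → K) (j : Fin m) (k e : ℕ) :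
    ((pderiv (R := K) j).toLinearMap ^ k) (lform a ^ e)
      = ((e.descFactorial k : K) * a j ^ k) • lform a ^ (e - k) := by
  induction k with
  | zero => simp
  | succ k ih =>
    have hstep : pderiv j (lform a ^ (e - k))
        = ((e - k : ℕ) : K) • (a j • lform a ^ (e - k - 1)) := by
      rw [(pderiv j).leibniz_pow, pderiv_lform]
      simp only [smul_eq_C_mul, nsmul_eq_mul, map_natCast]
      ring
    rw [pow_succ', Module.End.mul_apply, ih, map_smul, Derivation.coeFn_coe, hstep,
      Nat.descFactorial_succ, Nat.cast_mul, smul_smul, smul_smul, Nat.sub_sub]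
    ring_nf

theorem list_prod_pderiv_pow_apply_lform_pow (a : Fin m → K) (l : List (Fin m × ℕ)) (e : ℕ) :
    (l.map fun p => (pderiv (R := K) p.1).toLinearMap ^ p.2).prod (lform a ^ e)
      = ((e.descFactorial (l.map Prod.snd).sum : K) * (l.map fun p => a p.1 ^ p.2).prod)
        • lform a ^ (e - (l.map Prod.snd).sum) := by
  induction l with
  | nil => simp
  | cons p l ih =>
    simp only [List.map_cons, List.prod_cons, List.sum_cons, Module.End.mul_apply, ih,
      map_smul, pderiv_pow_apply_lform_pow, smul_smul, Nat.sub_sub, add_comm p.2]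
    rw [← Nat.descFactorial_mul_descFactorial (Nat.le_add_right (l.map Prod.snd).sum p.2),
      Nat.add_sub_cancel_left]
    congr 1
    push_cast
    ring

theorem pd_lform_pow (a : Fin m → K) (σ : Fin m → ℕ) (e : ℕ) :
    pd K σ (lform a ^ e)
      = ((e.descFactorial (∑ j, σ j) : K) * ∏ j, a j ^ σ j) • lform a ^ (e - ∑ j, σ j) := by
  simpa [pd, List.map_ofFn, Function.comp_def, List.sum_ofFn, List.prod_ofFn] using
    list_prod_pderiv_pow_apply_lform_pow a (List.ofFn fun j => (j, σ j)) e

/-- The pairing `⟨L_a^s, ξ⟩` of the `s`-th power of `lform a` with a point `ξ` of the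
coordinate space of the order-`s` derivatives. -/
def lformPowPairing (s : ℕ) (a : Fin m → K) (ξ : (Fin m → ℕ) → K) : K :=
  ∑ σ ∈ Finset.Nat.antidiagonalTuple m s, (∏ t, a t ^ σ t) * ξ σ

theorem sum_smul_pd_lform_pow (s e : ℕ) (a : Fin m → K) (ξ : (Fin m → ℕ) → K) :
    ∑ σ ∈ Finset.Nat.antidiagonalTuple m s, ξ σ • pd K σ (lform a ^ e)
      = ((e.descFactorial s : K) * lformPowPairing s a ξ) • lform a ^ (e - s) := by
  rw [lformPowPairing, Finset.mul_sum, Finset.sum_smul]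
  refine Finset.sum_congr rfl fun σ hσ => ?_
  rw [Finset.Nat.mem_antidiagonalTuple] at hσ
  rw [pd_lform_pow, hσ, smul_smul]
  ring_nf

theorem sum_smul_pd_sum_smul_lform_pow {ι : Type*} (t : Finset ι) (s e : ℕ) (lam : ι → K)
    (a : ι → Fin m → K) (ξ : (Fin m → ℕ) → K) :
    ∑ σ ∈ Finset.Nat.antidiagonalTuple m s, ξ σ • pd K σ (∑ i ∈ t, lam i • lform (a i) ^ e)
      = ∑ i ∈ t, (lam i * ((e.descFactorial s : K) * lformPowPairing s (a i) ξ))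
          • lform (a i) ^ (e - s) := by
  simp only [map_sum, map_smul, Finset.smul_sum]
  rw [Finset.sum_comm]
  refine Finset.sum_congr rfl fun i _ => ?_
  simp only [smul_comm (ξ _) (lam i)]
  rw [← Finset.smul_sum, sum_smul_pd_lform_pow, smul_smul]

end DerivativeLemma

theorem stmt6_general {K : Type} [Field K] (n d s h : ℕ)
    (lam : Fin h → K)
    (α : Fin h → Fin (n + 1) → K)
    (F : MvPolynomial (Fin (n + 1)) K)
    (hdec : F = ∑ i : Fin h, lam i • (lform (α i)) ^ d)
    (J : Finset (Fin h))
    (ξ : (Fin (n + 1) → ℕ) → K)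
    (hξ : ∀ j ∈ J,
      ∑ σ ∈ Finset.Nat.antidiagonalTuple (n + 1) s, (∏ t, α j t ^ σ t) * ξ σ = 0) :
    (∑ σ ∈ Finset.Nat.antidiagonalTuple (n + 1) s, ξ σ • pd K σ F) ∈
      Submodule.span K ((fun i : Fin h => (lform (α i)) ^ (d - s)) '' {i | i ∉ J}) := by
  rw [hdec, sum_smul_pd_sum_smul_lform_pow]
  refine Submodule.sum_mem _ fun i _ => ?_
  by_cases hi : i ∈ J
  · have hpair : lformPowPairing s (α i) ξ = 0 := hξ i hi
    simp [hpair]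
  · exact Submodule.smul_mem _ _ (Submodule.subset_span ⟨i, hi, rfl⟩)

/-- Star configurations in the space of derivatives: let `F = ∑ λ_i L_i^d` with the `L_i`
pairwise non-proportional, and assume the powers `L_i^s` span the degree-`s` homogeneous
component.  Then for every `c`-element subset `J` of the indices, each point `ξ` of the
codimension-`c` intersection `⋂_{j ∈ J} H_j` (where `H_j = {⟨L_j^s, ξ⟩ = 0}`) yields a
derivative `D^s_ξ(F)` lying in the span of the `h - c` powers `L_i^{d-s}`, `i ∉ J`; i.e. the
codimension-`c` star configuration is contained in `H^s_{∂F} ∩ Sec_{h-c}(V^n_{d-s})`. -/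
theorem stmt6 {K : Type} [Field K] [CharZero K] (n d s h : ℕ) (hs : 1 ≤ s) (hsd : s ≤ d)
    (lam : Fin h → K) (hlam : ∀ i, lam i ≠ 0)
    (α : Fin h → Fin (n + 1) → K)
    (F : MvPolynomial (Fin (n + 1)) K)
    (hdec : F = ∑ i : Fin h, lam i • (lform (α i)) ^ d)
    (hprop : ∀ i j : Fin h, i ≠ j → ∀ c : K, lform (α i) ≠ c • lform (α j))
    (hspan : MvPolynomial.homogeneousSubmodule (Fin (n + 1)) K s ≤
      Submodule.span K (Set.range fun i : Fin h => (lform (α i)) ^ s))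
    (c : ℕ) (hc : c ≤ h) (J : Finset (Fin h)) (hJ : J.card = c)
    (ξ : (Fin (n + 1) → ℕ) → K)
    (hξ : ∀ j ∈ J,
      ∑ σ ∈ Finset.Nat.antidiagonalTuple (n + 1) s, (∏ t, α j t ^ σ t) * ξ σ = 0) :
    (∑ σ ∈ Finset.Nat.antidiagonalTuple (n + 1) s, ξ σ • pd K σ F) ∈
      Submodule.span K ((fun i : Fin h => (lform (α i)) ^ (d - s)) '' {i | i ∉ J}) :=
  stmt6_general n d s h lam α F hdec J ξ hξ
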